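/- arXiv:1105.4349 — 2 statements merged into one kernel-verified Lean document; each statement's English description precedes it below -/
import Mathlib

section
/- Discrete uniform Gronwall lemma: Let $\Delta t > 0$, let $n_0, n_1$ be positive integers, and let $(\xi_n)$, $(\eta_n)$, $(\zeta_n)$ be positive sequences such that $\Delta t\,\eta_{n+1} < 1/2$ for all $n \ge n_0$ and $(1-\Delta t\,\eta_{n+1})\,\xi_{n+1} \le \xi_n + \Delta t\,\zeta_{n+1}$ for all $n \ge n_0$. Assume there are constants $a_1, a_2, a_3$ such that for every $n_2 \ge n_0$: $\Delta t \sum_{n=n_2}^{n_2+n_1+1} \eta_n \le a_1$, $\Delta t \sum_{n=n_2}^{n_2+n_1+1} \zeta_n \le a_2$, and $\Delta t \sum_{n=n_2}^{n_2+n_1+1} \xi_n \le a_3$. Then $\xi_{n+1} \le \left(\frac{a_3}{\Delta t\, n_1} + a_2\right) e^{4a_1}$ for all $n > n_0 + n_1$. -/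
/-!
For `0 ≤ a ≤ 1/2` one has `1 ≤ (1 - a) e^{2a}`, so each step of the recursion gives
`ξ (k + 1) ≤ (ξ k + Δt ζ (k + 1)) e^{2 Δt η (k + 1)}`, and iterating from `m` to `n` gives
`ξ n ≤ (ξ m + Δt Σ ζ) e^{2 Δt Σ η}`. The `n₁ + 1` values `ξ m` with `n - n₁ ≤ m ≤ n` have sum at
most `a₃ / Δt`, so one of them is at most `a₃ / (Δt n₁)`. Iterating from that `m` to `n + 1` stays
inside the window `[n - n₁, n + 1]`, so it adds at most `a₂` and a factor `e^{2a₁} ≤ e^{4a₁}`.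
-/

open Finset Real

lemma one_le_one_sub_mul_exp_two_mul {a : ℝ} (h0 : 0 ≤ a) (h1 : a ≤ 1 / 2) :
    1 ≤ (1 - a) * exp (2 * a) := by
  nlinarith [add_one_le_exp (2 * a)]

lemma le_mul_exp_of_one_sub_mul_le {x y a b : ℝ} (hy : 0 ≤ y) (h0 : 0 ≤ a) (h1 : a ≤ 1 / 2)
    (h : (1 - a) * y ≤ x + b) : y ≤ (x + b) * exp (2 * a) :=
  calc y ≤ y * ((1 - a) * exp (2 * a)) :=
        le_mul_of_one_le_right hy (one_le_one_sub_mul_exp_two_mul h0 h1)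
    _ = (1 - a) * y * exp (2 * a) := by ring
    _ ≤ (x + b) * exp (2 * a) := by gcongr

theorem le_mul_exp_sum_of_one_sub_mul_le {x a b : ℕ → ℝ} {m : ℕ}
    (hx : ∀ k, 0 ≤ x k) (ha : ∀ k, 0 ≤ a k) (hb : ∀ k, 0 ≤ b k)
    (ha_le : ∀ k ≥ m, a (k + 1) ≤ 1 / 2)
    (hrec : ∀ k ≥ m, (1 - a (k + 1)) * x (k + 1) ≤ x k + b (k + 1)) {n : ℕ} (hmn : m ≤ n) :
    x n ≤ (x m + ∑ k ∈ Ioc m n, b k) * exp (2 * ∑ k ∈ Ioc m n, a k) := by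
  induction n, hmn using Nat.le_induction with
  | base => simp
  | succ n hmn ih =>
    have hA : 1 ≤ exp (2 * ∑ k ∈ Ioc m n, a k) :=
      one_le_exp (mul_nonneg zero_le_two (sum_nonneg fun k _ => ha k))
    rw [sum_Ioc_succ_top hmn, sum_Ioc_succ_top hmn, mul_add, exp_add]
    calc x (n + 1) ≤ (x n + b (n + 1)) * exp (2 * a (n + 1)) :=
          le_mul_exp_of_one_sub_mul_le (hx _) (ha _) (ha_le n hmn) (hrec n hmn)
      _ ≤ ((x m + ∑ k ∈ Ioc m n, b k) * exp (2 * ∑ k ∈ Ioc m n, a k)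
            + b (n + 1) * exp (2 * ∑ k ∈ Ioc m n, a k)) * exp (2 * a (n + 1)) := by
          gcongr
          exact le_mul_of_one_le_right (hb _) hA
      _ = _ := by ring

lemma exists_mem_Icc_le_div_of_sum_le {x : ℕ → ℝ} (hx : ∀ k, 0 ≤ x k) {N p : ℕ} (hp : 0 < p)
    {c : ℝ} (h : ∑ k ∈ Icc N (N + p), x k ≤ c) : ∃ m ∈ Icc N (N + p), x m ≤ c / p := by
  have hc : 0 ≤ c := (sum_nonneg fun k _ => hx k).trans h
  refine exists_le_of_sum_le (nonempty_Icc.mpr (N.le_add_right p)) (h.trans ?_)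
  have hp' : (0 : ℝ) < p := Nat.cast_pos.mpr hp
  rw [sum_const, Nat.card_Icc, show N + p + 1 - N = p + 1 by omega, nsmul_eq_mul,
    Nat.cast_add_one, mul_div_assoc', le_div_iff₀ hp']
  nlinarith

lemma sum_mul_le_of_subset {ι : Type*} {s t : Finset ι} {f : ι → ℝ} {d c : ℝ} (hd : 0 ≤ d)
    (hf : ∀ k, 0 ≤ f k) (hst : s ⊆ t) (h : d * ∑ k ∈ t, f k ≤ c) : ∑ k ∈ s, d * f k ≤ c := by
  rw [← mul_sum]
  exact (mul_le_mul_of_nonneg_left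
    (sum_le_sum_of_subset_of_nonneg hst fun k _ _ => hf k) hd).trans h

theorem discrete_uniform_gronwall_general (dt : ℝ) (hdt : 0 < dt)
    (n0 n1 : ℕ) (hn1 : 0 < n1)
    (ξ η ζ : ℕ → ℝ)
    (hξ : ∀ n, 0 < ξ n) (hη : ∀ n, 0 < η n) (hζ : ∀ n, 0 < ζ n)
    (hsmall : ∀ n ≥ n0, dt * η (n + 1) < 1 / 2)
    (hrec : ∀ n ≥ n0, (1 - dt * η (n + 1)) * ξ (n + 1) ≤ ξ n + dt * ζ (n + 1))
    (a1 a2 a3 : ℝ)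
    (ha1 : ∀ n2 ≥ n0, dt * ∑ n ∈ Finset.Icc n2 (n2 + n1 + 1), η n ≤ a1)
    (ha2 : ∀ n2 ≥ n0, dt * ∑ n ∈ Finset.Icc n2 (n2 + n1 + 1), ζ n ≤ a2)
    (ha3 : ∀ n2 ≥ n0, dt * ∑ n ∈ Finset.Icc n2 (n2 + n1 + 1), ξ n ≤ a3) :
    ∀ n > n0 + n1, ξ (n + 1) ≤ (a3 / (dt * n1) + a2) * Real.exp (4 * a1) := by
  intro n hn
  obtain ⟨N, rfl⟩ : ∃ N, n = N + n1 := ⟨n - n1, by omega⟩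
  have hN : N ≥ n0 := by omega
  obtain ⟨m, hm, hξm⟩ : ∃ m ∈ Icc N (N + n1), ξ m ≤ a3 / (dt * n1) := by
    rw [← div_div]
    refine exists_mem_Icc_le_div_of_sum_le (fun k => (hξ k).le) hn1 ?_
    rw [le_div_iff₀' hdt, mul_sum]
    exact sum_mul_le_of_subset hdt.le (fun k => (hξ k).le) (Icc_subset_Icc_right (by omega))
      (ha3 N hN)
  rw [mem_Icc] at hm
  have hsub : Ioc m (N + n1 + 1) ⊆ Icc N (N + n1 + 1) :=
    Ioc_subset_Icc_self.trans (Icc_subset_Icc_left hm.1)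
  have hη_sum := sum_mul_le_of_subset hdt.le (fun k => (hη k).le) hsub (ha1 N hN)
  have hζ_sum := sum_mul_le_of_subset hdt.le (fun k => (hζ k).le) hsub (ha2 N hN)
  calc ξ (N + n1 + 1)
      ≤ (ξ m + ∑ k ∈ Ioc m (N + n1 + 1), dt * ζ k) *
          exp (2 * ∑ k ∈ Ioc m (N + n1 + 1), dt * η k) :=
        le_mul_exp_sum_of_one_sub_mul_le (fun k => (hξ k).le) (fun k => (mul_pos hdt (hη k)).le)
          (fun k => (mul_pos hdt (hζ k)).le) (fun k hk => (hsmall k (by omega)).le)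
          (fun k hk => hrec k (by omega)) (by omega)
    _ ≤ (a3 / (dt * n1) + a2) * exp (4 * a1) := by
        have hη_nonneg := sum_nonneg fun k (_ : k ∈ Ioc m (N + n1 + 1)) => (mul_pos hdt (hη k)).le
        have hζ_nonneg := sum_nonneg fun k (_ : k ∈ Ioc m (N + n1 + 1)) => (mul_pos hdt (hζ k)).le
        gcongr
        · linarith [hξ m]
        · linarith

theorem discrete_uniform_gronwall (dt : ℝ) (hdt : 0 < dt)
    (n0 n1 : ℕ) (hn0 : 0 < n0) (hn1 : 0 < n1)
    (ξ η ζ : ℕ → ℝ)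
    (hξ : ∀ n, 0 < ξ n) (hη : ∀ n, 0 < η n) (hζ : ∀ n, 0 < ζ n)
    (hsmall : ∀ n ≥ n0, dt * η (n + 1) < 1 / 2)
    (hrec : ∀ n ≥ n0, (1 - dt * η (n + 1)) * ξ (n + 1) ≤ ξ n + dt * ζ (n + 1))
    (a1 a2 a3 : ℝ)
    (ha1 : ∀ n2 ≥ n0, dt * ∑ n ∈ Finset.Icc n2 (n2 + n1 + 1), η n ≤ a1)
    (ha2 : ∀ n2 ≥ n0, dt * ∑ n ∈ Finset.Icc n2 (n2 + n1 + 1), ζ n ≤ a2)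
    (ha3 : ∀ n2 ≥ n0, dt * ∑ n ∈ Finset.Icc n2 (n2 + n1 + 1), ξ n ≤ a3) :
    ∀ n > n0 + n1, ξ (n + 1) ≤ (a3 / (dt * n1) + a2) * Real.exp (4 * a1) :=
  discrete_uniform_gronwall_general dt hdt n0 n1 hn1 ξ η ζ hξ hη hζ hsmall hrec a1 a2 a3 ha1 ha2 ha3
end

section
/- Collocation interpolation stability: Let $N \ge 1$, $d \ge 1$, and let $\varphi$ be a trigonometric polynomial on the $d$-dimensional torus with frequencies at most $2N$ in each direction (i.e., $\varphi \in P^{2N}$). Let $\mathcal{I}_N\varphi$ denote the trigonometric interpolant of $\varphi$ at the uniform grid with $(2N+1)^d$ points. Then for every integer $k \ge 0$: $\|\mathcal{I}_N\varphi\|_{H^k} \le (\sqrt{2})^d\, \|\varphi\|_{H^k}$. -/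
/-- The Fourier coefficients of the collocation (pseudo-spectral) interpolant `𝓘_N φ`
of a trigonometric polynomial given by coefficients `c`: the interpolant lives on
frequencies `|k_i| ≤ N` and its coefficients are obtained from `c` by the aliasing
formula, summing all coefficients whose frequency is congruent to `k` modulo `2N+1`
(this characterizes interpolation at the uniform grid with `(2N+1)^d` points). -/
noncomputable def interpCoeff (d N : ℕ) (c : (Fin d → ℤ) → ℂ) : (Fin d → ℤ) → ℂ :=
  fun k =>
    if ∀ i, |k i| ≤ (N : ℤ) then
      ∑' m : Fin d → ℤ, (if ∀ i, ((2 * N + 1 : ℤ)) ∣ (m i - k i) then c m else 0)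
    else 0

/-- The squared `H^k` Sobolev norm of a trigonometric polynomial with Fourier
coefficients `c`: `‖φ‖_{H^k}² = ∑_m (1 + |m|²)^k |c_m|²`. -/
noncomputable def sobSq (d : ℕ) (k : ℕ) (c : (Fin d → ℤ) → ℂ) : ℝ :=
  ∑' m : Fin d → ℤ, ((1 : ℝ) + ∑ i, ((m i : ℝ)) ^ 2) ^ k * ‖c m‖ ^ 2

/-- The alias map: for each sign pattern `ε`, the frequency congruent to `k`
mod `2N+1` obtained by shifting coordinate `i` by `±(2N+1)` when `ε i` is true. -/
def aliasFn {d : ℕ} (N : ℕ) (k : Fin d → ℤ) (ε : Fin d → Bool) : Fin d → ℤ :=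
  fun i => if ε i then (if 1 ≤ k i then k i - (2 * N + 1) else k i + (2 * N + 1)) else k i

lemma alias_coord {N m k : ℤ} (hN : 1 ≤ N) (hk : |k| ≤ N) (hm : |m| ≤ 2 * N)
    (hdvd : (2 * N + 1) ∣ (m - k)) :
    m = k ∨ (1 ≤ k ∧ m = k - (2 * N + 1)) ∨ (¬ 1 ≤ k ∧ m = k + (2 * N + 1)) := by
  obtain ⟨q, hq⟩ := hdvd
  rw [abs_le] at hk hm
  have h1 : -1 ≤ q := by nlinarith
  have h2 : q ≤ 1 := by nlinarith
  interval_cases q <;> omega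

lemma aliasFn_inj {d : ℕ} (N : ℕ) (hN : 1 ≤ N) {k k' : Fin d → ℤ}
    (hk : ∀ i, |k i| ≤ (N : ℤ)) (hk' : ∀ i, |k' i| ≤ (N : ℤ)) {ε ε' : Fin d → Bool}
    (h : aliasFn N k ε = aliasFn N k' ε') : k = k' ∧ ε = ε' := by
  have hN' : (1 : ℤ) ≤ N := by exact_mod_cast hN
  have key : ∀ i, k i = k' i ∧ ε i = ε' i := by
    intro i
    have := congrFun h i
    have h1 := abs_le.1 (hk i)
    have h2 := abs_le.1 (hk' i)
    simp only [aliasFn] at this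
    cases hε : ε i <;> cases hε' : ε' i <;> rw [hε, hε'] at this <;>
      simp only [Bool.false_eq_true, if_true, if_false] at this <;>
      refine ⟨?_, ?_⟩ <;>
      first
      | rfl
      | omega
      | (split_ifs at this <;> omega)
      | (exfalso; split_ifs at this <;> omega)
  exact ⟨funext fun i => (key i).1, funext fun i => (key i).2⟩

lemma sqrt_two_pow (d : ℕ) : Real.sqrt (2 ^ d) = Real.sqrt 2 ^ d := by
  induction d with
  | zero => simp
  | succ n ih => rw [pow_succ, pow_succ, Real.sqrt_mul (by positivity), ih]


/-- Collocation interpolation stability: for any `φ ∈ P^{2N}` (a trigonometric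
polynomial with frequencies at most `2N` in each direction, encoded by its Fourier
coefficients `c`) on the `d`-dimensional torus, `‖𝓘_N φ‖_{H^k} ≤ (√2)^d ‖φ‖_{H^k}`. -/
theorem collocation_interpolation_stability (d N : ℕ) (hd : 1 ≤ d) (hN : 1 ≤ N)
    (c : (Fin d → ℤ) → ℂ)
    (hsupp : ∀ m : Fin d → ℤ, ¬ (∀ i, |m i| ≤ (2 * N : ℤ)) → c m = 0)
    (k : ℕ) :
    Real.sqrt (sobSq d k (interpCoeff d N c)) ≤
      Real.sqrt 2 ^ d * Real.sqrt (sobSq d k c) := by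
  have hN' : (1 : ℤ) ≤ N := by exact_mod_cast hN
  -- the weight function
  set w : (Fin d → ℤ) → ℝ := fun m => ((1 : ℝ) + ∑ i, ((m i : ℝ)) ^ 2) ^ k with hw
  have hwnn : ∀ m, 0 ≤ w m := fun m => by positivity
  -- the summand for sobSq c
  set g : (Fin d → ℤ) → ℝ := fun m => w m * ‖c m‖ ^ 2 with hg
  have hgnn : ∀ m, 0 ≤ g m := fun m => by positivity
  -- boxes
  set B1 : Finset (Fin d → ℤ) := Fintype.piFinset fun _ => Finset.Icc (-(N : ℤ)) N with hB1
  set B2 : Finset (Fin d → ℤ) :=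
    Fintype.piFinset fun _ => Finset.Icc (-(2 * N : ℤ)) (2 * N) with hB2
  have memB1 : ∀ m : Fin d → ℤ, m ∈ B1 ↔ ∀ i, |m i| ≤ (N : ℤ) := by
    intro m; simp [hB1, Fintype.mem_piFinset, abs_le]
  have memB2 : ∀ m : Fin d → ℤ, m ∈ B2 ↔ ∀ i, |m i| ≤ (2 * N : ℤ) := by
    intro m; simp [hB2, Fintype.mem_piFinset, abs_le]
  have hc0 : ∀ m ∉ B2, c m = 0 := fun m hm => hsupp m (fun h => hm ((memB2 m).2 h))
  -- g is summable with finite support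
  have hgsum : Summable g := summable_of_ne_finset_zero (s := B2)
    (fun m hm => by simp [hg, hc0 m hm])
  have hsobc : sobSq d k c = ∑ m ∈ B2, g m := by
    apply tsum_eq_sum
    intro m hm; simp [hg, hc0 m hm]
  have hsobc_nn : 0 ≤ sobSq d k c := by
    rw [hsobc]; exact Finset.sum_nonneg fun m _ => hgnn m
  -- formula for interpCoeff on B1
  have hinterp : ∀ κ : Fin d → ℤ, (∀ i, |κ i| ≤ (N : ℤ)) →
      interpCoeff d N c κ = ∑ ε : Fin d → Bool, c (aliasFn N κ ε) := by
    intro κ hκ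
    rw [interpCoeff, if_pos hκ]
    have hsub : ∀ m : Fin d → ℤ,
        m ∉ Finset.image (aliasFn N κ) Finset.univ →
        (if ∀ i, ((2 * N + 1 : ℤ)) ∣ (m i - κ i) then c m else 0) = 0 := by
      intro m hm
      split_ifs with hdvd
      · by_cases hmB : m ∈ B2
        · exfalso
          apply hm
          rw [Finset.mem_image]
          refine ⟨fun i => decide (m i ≠ κ i), Finset.mem_univ _, ?_⟩
          funext i
          have := alias_coord hN' (hκ i) ((memB2 m).1 hmB i) (hdvd i)
          simp only [aliasFn]
          rcases this with h | ⟨h1, h2⟩ | ⟨h1, h2⟩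
          · simp [h]
          · have hne : m i ≠ κ i := by omega
            simp [hne, h1, h2] <;> omega
          · have hne : m i ≠ κ i := by omega
            simp [hne, h1, h2] <;> omega
        · exact hc0 m hmB
      · rfl
    rw [tsum_eq_sum hsub]
    have hdvd_all : ∀ ε : Fin d → Bool, ∀ i,
        ((2 * N + 1 : ℤ)) ∣ (aliasFn N κ ε i - κ i) := by
      intro ε i
      simp only [aliasFn]
      split_ifs
      · exact ⟨-1, by ring⟩
      · exact ⟨1, by ring⟩
      · simp
    rw [Finset.sum_image (fun ε _ ε' _ h => (aliasFn_inj N hN hκ hκ h).2)]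
    apply Finset.sum_congr rfl
    intro ε _
    rw [if_pos (hdvd_all ε)]
  -- interpCoeff vanishes off B1
  have hinterp0 : ∀ κ ∉ B1, interpCoeff d N c κ = 0 := by
    intro κ hκ
    rw [interpCoeff, if_neg (fun h => hκ ((memB1 κ).2 h))]
  -- sobSq of interpolant as finite sum
  have hsobi : sobSq d k (interpCoeff d N c)
      = ∑ κ ∈ B1, w κ * ‖interpCoeff d N c κ‖ ^ 2 := by
    apply tsum_eq_sum
    intro κ hκ; simp [hinterp0 κ hκ]
  -- weight monotonicity along aliases
  have hwmono : ∀ κ : Fin d → ℤ, (∀ i, |κ i| ≤ (N : ℤ)) → ∀ ε : Fin d → Bool,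
      w κ ≤ w (aliasFn N κ ε) := by
    intro κ hκ ε
    apply pow_le_pow_left₀ (by positivity)
    have : ∀ i, ((κ i : ℝ)) ^ 2 ≤ ((aliasFn N κ ε i : ℝ)) ^ 2 := by
      intro i
      have h1 := abs_le.1 (hκ i)
      have key : (κ i) ^ 2 ≤ (aliasFn N κ ε i) ^ 2 := by
        simp only [aliasFn]
        split_ifs <;> nlinarith
      calc ((κ i : ℝ)) ^ 2 = (((κ i) ^ 2 : ℤ) : ℝ) := by push_cast; ring
        _ ≤ (((aliasFn N κ ε i) ^ 2 : ℤ) : ℝ) := by exact_mod_cast key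
        _ = ((aliasFn N κ ε i : ℝ)) ^ 2 := by push_cast; ring
    linarith [Finset.sum_le_sum (fun i (_ : i ∈ Finset.univ) => this i)]
  -- main inequality on the squared norms
  have main : sobSq d k (interpCoeff d N c) ≤ 2 ^ d * sobSq d k c := by
    rw [hsobi]
    have step1 : ∀ κ ∈ B1, w κ * ‖interpCoeff d N c κ‖ ^ 2
        ≤ 2 ^ d * ∑ ε : Fin d → Bool, g (aliasFn N κ ε) := by
      intro κ hκ
      have hκ' := (memB1 κ).1 hκ
      rw [hinterp κ hκ']
      have hcs : ‖∑ ε : Fin d → Bool, c (aliasFn N κ ε)‖ ^ 2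
          ≤ 2 ^ d * ∑ ε : Fin d → Bool, ‖c (aliasFn N κ ε)‖ ^ 2 := by
        calc ‖∑ ε : Fin d → Bool, c (aliasFn N κ ε)‖ ^ 2
            ≤ (∑ ε : Fin d → Bool, ‖c (aliasFn N κ ε)‖) ^ 2 := by
              apply pow_le_pow_left₀ (norm_nonneg _) (norm_sum_le _ _)
          _ ≤ (Finset.univ : Finset (Fin d → Bool)).card
                * ∑ ε : Fin d → Bool, ‖c (aliasFn N κ ε)‖ ^ 2 :=
              sq_sum_le_card_mul_sum_sq
          _ = 2 ^ d * ∑ ε : Fin d → Bool, ‖c (aliasFn N κ ε)‖ ^ 2 := by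
              simp [Finset.card_univ]
      calc w κ * ‖∑ ε : Fin d → Bool, c (aliasFn N κ ε)‖ ^ 2
          ≤ w κ * (2 ^ d * ∑ ε : Fin d → Bool, ‖c (aliasFn N κ ε)‖ ^ 2) :=
            mul_le_mul_of_nonneg_left hcs (hwnn κ)
        _ = 2 ^ d * ∑ ε : Fin d → Bool, w κ * ‖c (aliasFn N κ ε)‖ ^ 2 := by
            rw [← Finset.mul_sum]; ring
        _ ≤ 2 ^ d * ∑ ε : Fin d → Bool, g (aliasFn N κ ε) := by
            apply mul_le_mul_of_nonneg_left _ (by positivity)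
            apply Finset.sum_le_sum
            intro ε _
            exact mul_le_mul_of_nonneg_right (hwmono κ hκ' ε) (by positivity)
    calc ∑ κ ∈ B1, w κ * ‖interpCoeff d N c κ‖ ^ 2
        ≤ ∑ κ ∈ B1, 2 ^ d * ∑ ε : Fin d → Bool, g (aliasFn N κ ε) :=
          Finset.sum_le_sum step1
      _ = 2 ^ d * ∑ κ ∈ B1, ∑ ε : Fin d → Bool, g (aliasFn N κ ε) := by
          rw [Finset.mul_sum]
      _ = 2 ^ d * ∑ p ∈ B1 ×ˢ (Finset.univ : Finset (Fin d → Bool)),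
            g (aliasFn N p.1 p.2) := by rw [Finset.sum_product]
      _ = 2 ^ d * ∑ m ∈ (B1 ×ˢ (Finset.univ : Finset (Fin d → Bool))).image
            (fun p => aliasFn N p.1 p.2), g m := by
          rw [Finset.sum_image]
          intro p hp q hq h
          have hp1 := (memB1 p.1).1 (Finset.mem_product.1 hp).1
          have hq1 := (memB1 q.1).1 (Finset.mem_product.1 hq).1
          obtain ⟨h1, h2⟩ := aliasFn_inj N hN hp1 hq1 h
          exact Prod.ext h1 h2
      _ ≤ 2 ^ d * ∑' m, g m := by
          apply mul_le_mul_of_nonneg_left _ (by positivity)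
          exact Summable.sum_le_tsum _ (fun m _ => hgnn m) hgsum
      _ = 2 ^ d * sobSq d k c := rfl
  calc Real.sqrt (sobSq d k (interpCoeff d N c))
      ≤ Real.sqrt (2 ^ d * sobSq d k c) := Real.sqrt_le_sqrt main
    _ = Real.sqrt 2 ^ d * Real.sqrt (sobSq d k c) := by
        rw [Real.sqrt_mul (by positivity), sqrt_two_pow]
end
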